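/- Let f : ℝ² → ℝ² be continuous, and suppose N₀ and N₂ are disjoint h-sets such that N₀ f-covers N₂ horizontally, N₂ f-covers N₂ horizontally, and N₂ f³-covers N₀ horizontally (covering with respect to the map f³). Then f has a fixed point, and for every n ≥ 5 a periodic point of least period exactly n, all of whose orbit points at itinerary-positions in N₂ lie in int N₂ and whose single loop-start lies in int N₀. -/

import Mathlib

/-- The h-set `[a,b] × [-r,r] ⊂ ℝ²`. -/
def HSet (a b r : ℝ) : Set (ℝ × ℝ) := Set.Icc a b ×ˢ Set.Icc (-r) r

/-- Left edge `{a} × [-r,r]`. -/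
def LeftEdge (a r : ℝ) : Set (ℝ × ℝ) := ({a} : Set ℝ) ×ˢ Set.Icc (-r) r

/-- Right edge `{b} × [-r,r]`. -/
def RightEdge (b r : ℝ) : Set (ℝ × ℝ) := ({b} : Set ℝ) ×ˢ Set.Icc (-r) r

/-- Horizontal boundary `[a,b] × {-r,r}`. -/
def HorizBdry (a b r : ℝ) : Set (ℝ × ℝ) := Set.Icc a b ×ˢ ({-r, r} : Set ℝ)

/-- Left side `(-∞,a) × ℝ`. -/
def LeftSide (a : ℝ) : Set (ℝ × ℝ) := Set.Iio a ×ˢ (Set.univ : Set ℝ)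

/-- Right side `(b,∞) × ℝ`. -/
def RightSide (b : ℝ) : Set (ℝ × ℝ) := Set.Ioi b ×ˢ (Set.univ : Set ℝ)

/-- `N₀ = [a₀,b₀] × [-r,r]` `g`-covers `N₁ = [a₁,b₁] × [-r,r]` horizontally. -/
def CoversH (g : ℝ × ℝ → ℝ × ℝ) (a₀ b₀ a₁ b₁ r : ℝ) : Prop :=
  g '' HSet a₀ b₀ r ⊆
      (LeftSide a₁ ∪ HSet a₁ b₁ r ∪ RightSide b₁) \ HorizBdry a₁ b₁ r ∧
  ((g '' LeftEdge a₀ r ⊆ LeftSide a₁ ∧ g '' RightEdge b₀ r ⊆ RightSide b₁) ∨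
   (g '' LeftEdge a₀ r ⊆ RightSide b₁ ∧ g '' RightEdge b₀ r ⊆ LeftSide a₁))

/-!
A continuous logarithm of a nonvanishing map on the (simply connected) plane gives a continuous
angle `θ`. The sign conditions of Poincaré–Miranda confine `θ` on each edge of a rectangle to a
single arc `{cos (θ - β) ≥ 0}`, and matching these arcs at the four corners forces a net turn of
`-2π` around the boundary, which is impossible for a single-valued `θ`. This yields a fixed point
of any continuous map that keeps heights in `[-r, r]` and sends the two vertical edges of an h-set
to its two outer sides.

For a closed chain of horizontal coverings `N₀ ⟹ N₁ ⟹ ⋯ ⟹ N₀`, clamp each image onto the next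
h-set, and the last one only vertically. The composite sends the vertical edges of `N₀` to opposite
sides, so it has a fixed point; the covering conditions then show that no clamp was active, so the
fixed point is a genuine periodic orbit through the interiors. The fixed point of `f` comes from
`N₂ ⟹ N₂`, the point of period `n` from `N₀ ⟹ N₂ ⟹ ⋯ ⟹ N₂ ⟹ N₀` (last step `f³`, `n - 3` visits to
`N₂`); a shorter period would be at most `n / 2 ≤ n - 3` and put the start of the orbit in `N₂`,
contradicting `N₀ ∩ N₂ = ∅`.
-/

open Set Real

theorem exists_continuous_exp_eq {X : Type*} [TopologicalSpace X] [SimplyConnectedSpace X]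
    [LocallyPathConnectedSpace X] {h : X → ℂ} (hh : Continuous h) (h0 : ∀ x, h x ≠ 0) :
    ∃ F : X → ℂ, Continuous F ∧ ∀ x, Complex.exp (F x) = h x := by
  obtain ⟨x₀⟩ : Nonempty X := inferInstance
  obtain ⟨F, ⟨-, hF⟩, -⟩ := Complex.isCoveringMapOn_exp.existsUnique_continuousMap_lifts
    ⟨h, hh⟩ (a₀ := x₀) (Complex.exp_log (h0 x₀)) h0
  exact ⟨F, F.continuous, fun x => congrFun hF x⟩

theorem exists_int_abs_sub_le_of_cos_nonneg {x : ℝ} (h : 0 ≤ cos x) :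
    ∃ k : ℤ, |x - 2 * π * k| ≤ π / 2 := by
  have hx := Real.Angle.cos_nonneg_iff_abs_toReal_le_pi_div_two.1
    (by rwa [Real.Angle.cos_coe] : 0 ≤ Real.Angle.cos (x : Real.Angle))
  obtain ⟨k, hk⟩ := Real.Angle.angle_eq_iff_two_pi_dvd_sub.1
    (Real.Angle.coe_toReal (x : Real.Angle)).symm
  exact ⟨k, by rwa [← hk, sub_sub_cancel]⟩

theorem IsPreconnected.exists_int_forall_abs_sub_le {X : Type*} [TopologicalSpace X] {S : Set X}
    (hS : IsPreconnected S) (hne : S.Nonempty) {φ : X → ℝ} (hφ : ContinuousOn φ S)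
    (hcos : ∀ x ∈ S, 0 ≤ cos (φ x)) : ∃ k : ℤ, ∀ x ∈ S, |φ x - 2 * π * k| ≤ π / 2 := by
  -- otherwise `φ` would pass through a point `2πi + π`, where `cos = -1`
  have separated : ∀ y ∈ S, ∀ z ∈ S, ∀ i j : ℤ, |φ y - 2 * π * i| ≤ π / 2 →
      |φ z - 2 * π * j| ≤ π / 2 → ¬ i < j := by
    intro y hy z hz i j hi hj hij
    have hij' : (i : ℝ) + 1 ≤ j := by exact_mod_cast hij
    have hmid : 2 * π * i + π ∈ Icc (φ y) (φ z) :=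
      ⟨by linarith [(abs_le.1 hi).2, pi_pos], by nlinarith [(abs_le.1 hj).1, pi_pos]⟩
    obtain ⟨w, hw, hwφ⟩ :=
      (hS.image φ hφ).Icc_subset (mem_image_of_mem φ hy) (mem_image_of_mem φ hz) hmid
    have hcos_w := hcos w hw
    rw [hwφ, show 2 * π * i + π = π + i * (2 * π) by ring, cos_add_int_mul_two_pi, cos_pi]
      at hcos_w
    linarith
  obtain ⟨x₀, hx₀⟩ := hne
  obtain ⟨k, hk⟩ := exists_int_abs_sub_le_of_cos_nonneg (hcos x₀ hx₀)
  refine ⟨k, fun x hx => ?_⟩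
  obtain ⟨m, hm⟩ := exists_int_abs_sub_le_of_cos_nonneg (hcos x hx)
  obtain rfl : m = k := le_antisymm (not_lt.1 (separated x₀ hx₀ x hx k m hk hm))
    (not_lt.1 (separated x hx x₀ hx₀ m k hm hk))
  exact hm

theorem eq_add_of_abs_sub_two_pi_mul_le {y₁ y₂ : ℝ} {k m j : ℤ} (h₁ : |y₁ - 2 * π * k| ≤ π / 2)
    (h₂ : |y₂ - 2 * π * m| ≤ π / 2) (h : y₂ = y₁ + π / 2 + 2 * π * j) : m = k + j := by
  obtain ⟨h₁l, h₁u⟩ := abs_le.1 h₁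
  obtain ⟨h₂l, h₂u⟩ := abs_le.1 h₂
  have hlt : ((k + j - m : ℤ) : ℝ) < (1 : ℤ) := by push_cast; nlinarith [pi_pos]
  have hgt : ((-1 : ℤ) : ℝ) < ((k + j - m : ℤ) : ℝ) := by push_cast; nlinarith [pi_pos]
  have := Int.cast_lt.1 hlt
  have := Int.cast_lt.1 hgt
  omega

theorem false_of_boundary_angle {θ : ℝ × ℝ → ℝ} {A B C D : ℝ} (hAB : A ≤ B) (hCD : C ≤ D)
    (hθ : ContinuousOn θ (Icc A B ×ˢ Icc C D))
    (hleft : ∀ y ∈ Icc C D, cos (θ (A, y)) ≤ 0) (hright : ∀ y ∈ Icc C D, 0 ≤ cos (θ (B, y)))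
    (hbot : ∀ x ∈ Icc A B, 0 ≤ sin (θ (x, C))) (htop : ∀ x ∈ Icc A B, sin (θ (x, D)) ≤ 0) :
    False := by
  have edge : ∀ (s t : ℝ) (e : ℝ → ℝ × ℝ) (β : ℝ), s ≤ t → Continuous e →
      MapsTo e (Icc s t) (Icc A B ×ˢ Icc C D) → (∀ x ∈ Icc s t, 0 ≤ cos (θ (e x) - β)) →
      ∃ k : ℤ, ∀ x ∈ Icc s t, |θ (e x) - β - 2 * π * k| ≤ π / 2 :=
    fun s t e β hst he hmaps hcos => isPreconnected_Icc.exists_int_forall_abs_sub_le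
      (nonempty_Icc.2 hst) ((hθ.comp he.continuousOn hmaps).sub continuousOn_const) hcos
  obtain ⟨kb, hkb⟩ := edge A B (·, C) (π / 2) hAB (by fun_prop)
    (fun x hx => ⟨hx, left_mem_Icc.2 hCD⟩) (fun x hx => by rw [cos_sub_pi_div_two]; exact hbot x hx)
  obtain ⟨kr, hkr⟩ := edge C D (B, ·) 0 hCD (by fun_prop)
    (fun y hy => ⟨right_mem_Icc.2 hAB, hy⟩) (fun y hy => by rw [sub_zero]; exact hright y hy)
  obtain ⟨kt, hkt⟩ := edge A B (·, D) (-(π / 2)) hAB (by fun_prop)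
    (fun x hx => ⟨hx, right_mem_Icc.2 hCD⟩)
    (fun x hx => by rw [sub_neg_eq_add, cos_add_pi_div_two]; linarith [htop x hx])
  obtain ⟨kl, hkl⟩ := edge C D (A, ·) (-π) hCD (by fun_prop)
    (fun y hy => ⟨left_mem_Icc.2 hAB, hy⟩)
    (fun y hy => by rw [sub_neg_eq_add, cos_add_pi]; linarith [hleft y hy])
  -- going once around the boundary, the arc index `k` would have to drop by one
  have hbr := eq_add_of_abs_sub_two_pi_mul_le (j := 0) (hkb B (right_mem_Icc.2 hAB))
    (hkr C (left_mem_Icc.2 hCD)) (by push_cast; ring)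
  have hrt := eq_add_of_abs_sub_two_pi_mul_le (j := 0) (hkr D (right_mem_Icc.2 hCD))
    (hkt B (right_mem_Icc.2 hAB)) (by push_cast; ring)
  have htl := eq_add_of_abs_sub_two_pi_mul_le (j := 0) (hkt A (left_mem_Icc.2 hAB))
    (hkl D (right_mem_Icc.2 hCD)) (by push_cast; ring)
  have hlb := eq_add_of_abs_sub_two_pi_mul_le (j := -1) (hkl C (left_mem_Icc.2 hCD))
    (hkb A (left_mem_Icc.2 hAB)) (by push_cast; ring)
  omega

def clampIcc (a b x : ℝ) : ℝ := max a (min b x)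

theorem continuous_clampIcc (a b : ℝ) : Continuous (clampIcc a b) := by
  unfold clampIcc; fun_prop

theorem clampIcc_mem {a b : ℝ} (h : a ≤ b) (x : ℝ) : clampIcc a b x ∈ Icc a b :=
  (projIcc a b h x).2

theorem clampIcc_of_mem {a b x : ℝ} (hx : x ∈ Icc a b) : clampIcc a b x = x :=
  congrArg Subtype.val (projIcc_of_mem (hx.1.trans hx.2) hx)

theorem clampIcc_of_le_left {a b x : ℝ} (h : a ≤ b) (hx : x ≤ a) : clampIcc a b x = a :=
  congrArg Subtype.val (projIcc_of_le_left h hx)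

theorem clampIcc_of_right_le {a b x : ℝ} (h : a ≤ b) (hx : b ≤ x) : clampIcc a b x = b :=
  congrArg Subtype.val (projIcc_of_right_le h hx)

theorem poincare_miranda {u v : ℝ × ℝ → ℝ} (hu : Continuous u) (hv : Continuous v)
    {A B C D : ℝ} (hAB : A ≤ B) (hCD : C ≤ D)
    (hleft : ∀ y ∈ Icc C D, u (A, y) ≤ 0) (hright : ∀ y ∈ Icc C D, 0 ≤ u (B, y))
    (hbot : ∀ x ∈ Icc A B, 0 ≤ v (x, C)) (htop : ∀ x ∈ Icc A B, v (x, D) ≤ 0) :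
    ∃ p ∈ Icc A B ×ˢ Icc C D, u p = 0 ∧ v p = 0 := by
  by_contra! hne
  -- precomposing with the clamp `c` extends `u + v i` to a nonvanishing map on the whole plane
  set c := Prod.map (clampIcc A B) (clampIcc C D)
  have hc_mem : ∀ p, c p ∈ Icc A B ×ˢ Icc C D :=
    fun p => ⟨clampIcc_mem hAB p.1, clampIcc_mem hCD p.2⟩
  have hc_of_mem : ∀ p ∈ Icc A B ×ˢ Icc C D, c p = p :=
    fun p hp => Prod.ext (clampIcc_of_mem hp.1) (clampIcc_of_mem hp.2)
  set w : ℝ × ℝ → ℂ := fun p => u (c p) + v (c p) * Complex.I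
  have hw : Continuous w := by
    have := (continuous_clampIcc A B).prodMap (continuous_clampIcc C D)
    fun_prop
  have hw0 : ∀ p, w p ≠ 0 := fun p h =>
    hne (c p) (hc_mem p) (by simpa [w] using congrArg Complex.re h)
      (by simpa [w] using congrArg Complex.im h)
  obtain ⟨F, hF, hFw⟩ := exists_continuous_exp_eq hw hw0
  have hu_eq : ∀ p ∈ Icc A B ×ˢ Icc C D, u p = Real.exp (F p).re * cos (F p).im := by
    intro p hp
    simpa [w, hc_of_mem p hp, Complex.exp_re] using (congrArg Complex.re (hFw p)).symm
  have hv_eq : ∀ p ∈ Icc A B ×ˢ Icc C D, v p = Real.exp (F p).re * sin (F p).im := by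
    intro p hp
    simpa [w, hc_of_mem p hp, Complex.exp_im] using (congrArg Complex.im (hFw p)).symm
  refine false_of_boundary_angle (θ := fun p => (F p).im) hAB hCD
    (Complex.continuous_im.comp hF).continuousOn (fun y hy => ?_) (fun y hy => ?_)
    (fun x hx => ?_) (fun x hx => ?_)
  · have := hleft y hy
    rw [hu_eq _ ⟨left_mem_Icc.2 hAB, hy⟩] at this
    exact nonpos_of_mul_nonpos_right this (Real.exp_pos _)
  · have := hright y hy
    rw [hu_eq _ ⟨right_mem_Icc.2 hAB, hy⟩] at this
    exact (mul_nonneg_iff_of_pos_left (Real.exp_pos _)).1 this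
  · have := hbot x hx
    rw [hv_eq _ ⟨hx, left_mem_Icc.2 hCD⟩] at this
    exact (mul_nonneg_iff_of_pos_left (Real.exp_pos _)).1 this
  · have := htop x hx
    rw [hv_eq _ ⟨hx, right_mem_Icc.2 hCD⟩] at this
    exact nonpos_of_mul_nonpos_right this (Real.exp_pos _)

def MapsToPair {α β : Type*} (f : α → β) (s t : Set α) (s' t' : Set β) : Prop :=
  (MapsTo f s s' ∧ MapsTo f t t') ∨ (MapsTo f s t' ∧ MapsTo f t s')

theorem mapsToPair_id {α : Type*} {s t : Set α} : MapsToPair (fun x : α => x) s t s t :=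
  Or.inl ⟨mapsTo_id s, mapsTo_id t⟩

namespace MapsToPair

variable {α β γ : Type*} {f : α → β} {s t : Set α} {s' t' : Set β}

theorem comp {g : β → γ} {s'' t'' : Set γ} (hg : MapsToPair g s' t' s'' t'')
    (hf : MapsToPair f s t s' t') : MapsToPair (g ∘ f) s t s'' t'' := by
  rcases hg with ⟨hgs, hgt⟩ | ⟨hgs, hgt⟩ <;> rcases hf with ⟨hfs, hft⟩ | ⟨hfs, hft⟩
  exacts [Or.inl ⟨hgs.comp hfs, hgt.comp hft⟩, Or.inr ⟨hgt.comp hfs, hgs.comp hft⟩,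
    Or.inr ⟨hgs.comp hfs, hgt.comp hft⟩, Or.inl ⟨hgt.comp hfs, hgs.comp hft⟩]

theorem union (h : MapsToPair f s t s' t') : MapsTo f (s ∪ t) (s' ∪ t') := by
  rcases h with ⟨hs, ht⟩ | ⟨hs, ht⟩
  · exact hs.union_union ht
  · exact union_comm t' s' ▸ hs.union_union ht

end MapsToPair

section HSets

variable {a b a' b' r : ℝ}

theorem CoversH.mapsToPair {g : ℝ × ℝ → ℝ × ℝ} (h : CoversH g a b a' b' r) :
    MapsToPair g (LeftEdge a r) (RightEdge b r) (LeftSide a') (RightSide b') := by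
  simp only [MapsToPair, mapsTo_iff_image_subset]
  exact h.2

theorem CoversH.mem_hSet {g : ℝ × ℝ → ℝ × ℝ} (h : CoversH g a b a' b' r) {z : ℝ × ℝ}
    (hz : z ∈ HSet a b r) (hx : (g z).1 ∈ Icc a' b') : g z ∈ HSet a' b' r := by
  obtain ⟨(hL | hH) | hR, -⟩ := h.1 (mem_image_of_mem g hz)
  · exact absurd hL.1 (not_lt.2 hx.1)
  · exact hH
  · exact absurd hR.1 (not_lt.2 hx.2)

theorem CoversH.notMem_horizBdry {g : ℝ × ℝ → ℝ × ℝ} (h : CoversH g a b a' b' r) {z : ℝ × ℝ}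
    (hz : z ∈ HSet a b r) : g z ∉ HorizBdry a' b' r :=
  (h.1 (mem_image_of_mem g hz)).2

theorem mem_interior_hSet {p : ℝ × ℝ} (hp : p ∈ HSet a b r) (hH : p ∉ HorizBdry a b r)
    (hV : p ∉ LeftEdge a r ∪ RightEdge b r) : p ∈ interior (HSet a b r) := by
  rw [HSet, interior_prod_eq, interior_Icc, interior_Icc]
  obtain ⟨⟨h₁, h₂⟩, h₃, h₄⟩ := hp
  refine ⟨⟨h₁.lt_of_ne ?_, h₂.lt_of_ne ?_⟩, h₃.lt_of_ne ?_, h₄.lt_of_ne ?_⟩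
  · exact fun he => hV (Or.inl ⟨he.symm, h₃, h₄⟩)
  · exact fun he => hV (Or.inr ⟨he, h₃, h₄⟩)
  · exact fun he => hH ⟨⟨h₁, h₂⟩, Or.inl he.symm⟩
  · exact fun he => hH ⟨⟨h₁, h₂⟩, Or.inr he⟩

def clampHSet (a b r : ℝ) : ℝ × ℝ → ℝ × ℝ :=
  Prod.map (clampIcc a b) (clampIcc (-r) r)

theorem continuous_clampHSet (a b r : ℝ) : Continuous (clampHSet a b r) :=
  (continuous_clampIcc a b).prodMap (continuous_clampIcc (-r) r)

theorem clampHSet_of_mem {p : ℝ × ℝ} (hp : p ∈ HSet a b r) : clampHSet a b r p = p :=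
  Prod.ext (clampIcc_of_mem hp.1) (clampIcc_of_mem hp.2)

theorem mapsToPair_clampHSet (hab : a ≤ b) (hr : 0 ≤ r) :
    MapsToPair (clampHSet a b r) (LeftSide a) (RightSide b) (LeftEdge a r) (RightEdge b r) :=
  Or.inl ⟨fun _ hp => ⟨clampIcc_of_le_left hab (le_of_lt hp.1), clampIcc_mem (neg_le_self hr) _⟩,
    fun _ hp => ⟨clampIcc_of_right_le hab (le_of_lt hp.1), clampIcc_mem (neg_le_self hr) _⟩⟩

theorem fst_mem_Icc_of_clampHSet_notMem (hab : a ≤ b) (hr : 0 ≤ r) {p : ℝ × ℝ}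
    (hp : clampHSet a b r p ∉ LeftEdge a r ∪ RightEdge b r) : p.1 ∈ Icc a b := by
  by_contra hx
  rw [mem_Icc, not_and_or, not_le, not_le] at hx
  exact hp ((mapsToPair_clampHSet hab hr).union (hx.imp (⟨·, trivial⟩) (⟨·, trivial⟩)))

theorem mapsToPair_clampSnd (r : ℝ) :
    MapsToPair (Prod.map id (clampIcc (-r) r)) (LeftSide a) (RightSide b) (LeftSide a)
      (RightSide b) :=
  Or.inl ⟨fun _ hp => ⟨hp.1, trivial⟩, fun _ hp => ⟨hp.1, trivial⟩⟩

theorem exists_fixedPoint_of_mapsToPair {Φ : ℝ × ℝ → ℝ × ℝ} (hΦ : Continuous Φ) (hab : a ≤ b)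
    (hr : 0 ≤ r) (hΦr : ∀ p, (Φ p).2 ∈ Icc (-r) r)
    (hΦe : MapsToPair Φ (LeftEdge a r) (RightEdge b r) (LeftSide a) (RightSide b)) :
    ∃ p ∈ HSet a b r, Φ p = p := by
  -- the sign `s` accounts for whether `Φ` keeps or swaps the two sides
  suffices ∀ s : ℝ, s ≠ 0 → (∀ y ∈ Icc (-r) r,
      s * ((Φ (a, y)).1 - a) ≤ 0 ∧ 0 ≤ s * ((Φ (b, y)).1 - b)) → ∃ p ∈ HSet a b r, Φ p = p by
    rcases hΦe with ⟨hL, hR⟩ | ⟨hL, hR⟩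
    · refine this 1 one_ne_zero fun y hy => ⟨?_, ?_⟩
      · linarith [(hL (mk_mem_prod rfl hy)).1.out]
      · linarith [(hR (mk_mem_prod rfl hy)).1.out]
    · refine this (-1) (by norm_num) fun y hy => ⟨?_, ?_⟩
      · linarith [(hL (mk_mem_prod rfl hy)).1.out]
      · linarith [(hR (mk_mem_prod rfl hy)).1.out]
  intro s hs hsign
  obtain ⟨p, hp, hu, hv⟩ := poincare_miranda (u := fun p => s * ((Φ p).1 - p.1))
    (v := fun p => (Φ p).2 - p.2) (by fun_prop) (by fun_prop) hab (neg_le_self hr)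
    (fun y hy => (hsign y hy).1) (fun y hy => (hsign y hy).2)
    (fun x _ => by linarith [(hΦr (x, -r)).1]) (fun x _ => by linarith [(hΦr (x, r)).2])
  exact ⟨p, hp, Prod.ext (sub_eq_zero.1 ((mul_eq_zero.1 hu).resolve_left hs)) (sub_eq_zero.1 hv)⟩

end HSets

def chainOrbit {α : Type*} (g : ℕ → α → α) (x : α) : ℕ → α
  | 0 => x
  | i + 1 => g i (chainOrbit g x i)

section ChainOrbit

variable {α : Type*} {g : ℕ → α → α}

theorem chainOrbit_eq_iterate {f : α → α} {n : ℕ} (h : ∀ i < n, g i = f) (x : α) :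
    chainOrbit g x n = f^[n] x := by
  induction n with
  | zero => rfl
  | succ n ih =>
    rw [chainOrbit, ih fun i hi => h i (by omega), h n (lt_add_one n),
      Function.iterate_succ_apply']

theorem continuous_chainOrbit [TopologicalSpace α] {n : ℕ} (hg : ∀ i < n, Continuous (g i)) :
    Continuous (chainOrbit g · n) := by
  induction n with
  | zero => exact continuous_id
  | succ n ih => exact (hg n (lt_add_one n)).comp (ih fun i hi => hg i (by omega))

theorem chainOrbit_mem {s : ℕ → Set α} {j k : ℕ}
    (hg : ∀ i, j ≤ i → i < k → MapsTo (g i) (s i) (s (i + 1))) (hjk : j ≤ k) {x : α}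
    (hx : chainOrbit g x j ∈ s j) : chainOrbit g x k ∈ s k := by
  induction k, hjk using Nat.le_induction with
  | base => exact hx
  | succ k hjk ih => exact hg k hjk (lt_add_one k) (ih fun i hji hik => hg i hji (by omega))

theorem mapsToPair_chainOrbit {s t : ℕ → Set α} {n : ℕ}
    (hg : ∀ i < n, MapsToPair (g i) (s i) (t i) (s (i + 1)) (t (i + 1))) :
    MapsToPair (chainOrbit g · n) (s 0) (t 0) (s n) (t n) := by
  induction n with
  | zero => exact mapsToPair_id
  | succ n ih => exact (hg n (lt_add_one n)).comp (ih fun i hi => hg i (by omega))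

end ChainOrbit

section CoveringChain

variable {g : ℕ → ℝ × ℝ → ℝ × ℝ} {a b : ℕ → ℝ} {r : ℝ} {m : ℕ}

def clampedChain (g : ℕ → ℝ × ℝ → ℝ × ℝ) (a b : ℕ → ℝ) (r : ℝ) (i : ℕ) : ℝ × ℝ → ℝ × ℝ :=
  clampHSet (a (i + 1)) (b (i + 1)) r ∘ g i

theorem mapsToPair_clampedChain {i : ℕ} (hab : a (i + 1) ≤ b (i + 1)) (hr : 0 ≤ r)
    (hcov : CoversH (g i) (a i) (b i) (a (i + 1)) (b (i + 1)) r) :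
    MapsToPair (clampedChain g a b r i) (LeftEdge (a i) r) (RightEdge (b i) r)
      (LeftEdge (a (i + 1)) r) (RightEdge (b (i + 1)) r) :=
  (mapsToPair_clampHSet hab hr).comp hcov.mapsToPair

variable (hab : ∀ i ≤ m, a i ≤ b i) (hr : 0 ≤ r)
  (hcov : ∀ i ≤ m, CoversH (g i) (a i) (b i) (a (i + 1)) (b (i + 1)) r)
  (ha : a (m + 1) = a 0) (hb : b (m + 1) = b 0)
include hab hr hcov ha hb

theorem exists_fixedPoint_clampedChain (hg : ∀ i ≤ m, Continuous (g i)) :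
    ∃ p ∈ HSet (a 0) (b 0) r,
      Prod.map id (clampIcc (-r) r) (g m (chainOrbit (clampedChain g a b r) p m)) = p := by
  refine exists_fixedPoint_of_mapsToPair ?_ (hab 0 (Nat.zero_le m)) hr
    (fun _ => clampIcc_mem (neg_le_self hr) _) ?_
  · exact (continuous_id.prodMap (continuous_clampIcc _ _)).comp ((hg m le_rfl).comp
      (continuous_chainOrbit fun i hi => (continuous_clampHSet _ _ _).comp (hg i hi.le)))
  · have hlast := (hcov m le_rfl).mapsToPair
    rw [ha, hb] at hlast
    exact (mapsToPair_clampSnd r).comp (hlast.comp (mapsToPair_chainOrbit fun i hi =>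
      mapsToPair_clampedChain (hab (i + 1) hi) hr (hcov i hi.le)))

section FixedPoint

variable {p : ℝ × ℝ} (hp : p ∈ HSet (a 0) (b 0) r)
  (hfix : Prod.map id (clampIcc (-r) r) (g m (chainOrbit (clampedChain g a b r) p m)) = p)
include hp hfix

/-- A clamped orbit that touches a vertical edge stays on the vertical edges, and is then pushed
off the strip of `N₀` by the last covering; so it never touches them. -/
theorem chainOrbit_clampedChain_notMem_edges {i : ℕ} (hi : i ≤ m) :
    chainOrbit (clampedChain g a b r) p i ∉ LeftEdge (a i) r ∪ RightEdge (b i) r := by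
  intro hedge
  have hm := chainOrbit_mem (s := fun i => LeftEdge (a i) r ∪ RightEdge (b i) r)
    (fun j _ hj => (mapsToPair_clampedChain (hab (j + 1) hj) hr (hcov j hj.le)).union) hi hedge
  have hside := (hcov m le_rfl).mapsToPair.union hm
  rw [ha, hb] at hside
  have hx : (g m (chainOrbit (clampedChain g a b r) p m)).1 = p.1 := by
    simpa using congrArg Prod.fst hfix
  rcases hside with hL | hR
  · exact absurd hp.1.1 (not_le.2 (hx ▸ hL.1))
  · exact absurd hp.1.2 (not_le.2 (hx ▸ hR.1))

theorem chainOrbit_clampedChain_eq {i : ℕ} (hi : i ≤ m) :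
    chainOrbit (clampedChain g a b r) p i = chainOrbit g p i ∧
      chainOrbit g p i ∈ HSet (a i) (b i) r := by
  induction i with
  | zero => exact ⟨rfl, hp⟩
  | succ i ih =>
    obtain ⟨heq, hmem⟩ := ih (by omega)
    have hoff := chainOrbit_clampedChain_notMem_edges hab hr hcov ha hb hp hfix hi
    simp only [chainOrbit, clampedChain, Function.comp_apply, heq] at hoff ⊢
    have hw := (hcov i (by omega)).mem_hSet hmem
      (fst_mem_Icc_of_clampHSet_notMem (hab (i + 1) hi) hr hoff)
    exact ⟨clampHSet_of_mem hw, hw⟩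

end FixedPoint

theorem exists_periodic_chainOrbit_of_coversH (hg : ∀ i ≤ m, Continuous (g i)) :
    ∃ p, chainOrbit g p (m + 1) = p ∧
      ∀ i ≤ m, chainOrbit g p i ∈ interior (HSet (a i) (b i) r) := by
  obtain ⟨p, hp, hfix⟩ := exists_fixedPoint_clampedChain hab hr hcov ha hb hg
  have hagree := fun i (hi : i ≤ m) => chainOrbit_clampedChain_eq hab hr hcov ha hb hp hfix hi
  obtain ⟨heq, hmem⟩ := hagree m le_rfl
  have hfix' : Prod.map id (clampIcc (-r) r) (chainOrbit g p (m + 1)) = p := by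
    rwa [chainOrbit, ← heq]
  have hlast : chainOrbit g p (m + 1) ∈ HSet (a 0) (b 0) r := by
    rw [← ha, ← hb]
    refine (hcov m le_rfl).mem_hSet hmem ?_
    rw [ha, hb]
    simpa using (congrArg Prod.fst hfix').symm ▸ hp.1
  have hclose : chainOrbit g p (m + 1) = p := by
    rwa [Prod.map, id, clampIcc_of_mem hlast.2] at hfix'
  refine ⟨p, hclose, fun i hi => mem_interior_hSet (hagree i hi).2 ?_ ?_⟩
  · cases i with
    | zero =>
      have := (hcov m le_rfl).notMem_horizBdry hmem
      rw [ha, hb] at this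
      show p ∉ _
      rwa [← hclose]
    | succ i => exact (hcov i (by omega)).notMem_horizBdry (hagree i (by omega)).2
  · exact (hagree i hi).1 ▸ chainOrbit_clampedChain_notMem_edges hab hr hcov ha hb hp hfix hi

end CoveringChain

theorem Function.minimalPeriod_eq_of_iterate_ne {α : Type*} {f : α → α} {x : α} {n : ℕ}
    (hn : 0 < n) (hx : IsPeriodicPt f n x) (hne : ∀ j, 0 < j → 2 * j ≤ n → f^[j] x ≠ x) :
    minimalPeriod f x = n := by
  obtain ⟨c, hc⟩ := hx.minimalPeriod_dvd
  have hpos := hx.minimalPeriod_pos hn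
  by_contra hlt
  have hc2 : 2 ≤ c := by
    rcases c with _ | _ | c
    · omega
    · exact absurd (by simpa using hc.symm) hlt
    · omega
  have hle : 2 * minimalPeriod f x ≤ n := by
    rw [hc, mul_comm]
    exact Nat.mul_le_mul_left _ hc2
  exact hne _ hpos hle iterate_minimalPeriod

theorem exists_periodicPt_of_coversH_loop {f : ℝ × ℝ → ℝ × ℝ} (hf : Continuous f)
    {a₀ b₀ a₂ b₂ r : ℝ} (h₀ : a₀ ≤ b₀) (h₂ : a₂ ≤ b₂) (hr : 0 ≤ r)
    (hc02 : CoversH f a₀ b₀ a₂ b₂ r) (hc22 : CoversH f a₂ b₂ a₂ b₂ r)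
    (hc20 : CoversH (f^[3]) a₂ b₂ a₀ b₀ r) {m : ℕ} (hm : 1 ≤ m) :
    ∃ p, f^[m + 3] p = p ∧ p ∈ interior (HSet a₀ b₀ r) ∧
      ∀ j, 1 ≤ j → j ≤ m → f^[j] p ∈ interior (HSet a₂ b₂ r) := by
  set g : ℕ → ℝ × ℝ → ℝ × ℝ := fun i => if i = m then f^[3] else f
  set a : ℕ → ℝ := fun i => if i = 0 ∨ i = m + 1 then a₀ else a₂
  set b : ℕ → ℝ := fun i => if i = 0 ∨ i = m + 1 then b₀ else b₂
  have hcov : ∀ i ≤ m, CoversH (g i) (a i) (b i) (a (i + 1)) (b (i + 1)) r := by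
    intro i hi
    rcases Nat.eq_zero_or_pos i with rfl | hi0
    · simpa [g, a, b, show m ≠ 0 by omega, show 0 ≠ m by omega, show 1 ≠ m + 1 by omega]
        using hc02
    rcases hi.lt_or_eq with him | rfl
    · simpa [g, a, b, him.ne, hi0.ne', show i ≠ m + 1 by omega] using hc22
    · simpa [g, a, b, hi0.ne'] using hc20
  obtain ⟨p, hclose, hint⟩ := exists_periodic_chainOrbit_of_coversH (g := g)
    (fun i _ => by dsimp only [a, b]; split_ifs <;> assumption) hr hcov (by simp [a]) (by simp [b])
    (fun i _ => by dsimp only [g]; split_ifs; exacts [hf.iterate 3, hf])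
  have horbit : ∀ j ≤ m, chainOrbit g p j = f^[j] p := fun j hj =>
    chainOrbit_eq_iterate (fun i hi => if_neg (by omega)) p
  refine ⟨p, ?_, by simpa [a, b, chainOrbit] using hint 0 (Nat.zero_le m), fun j hj hjm => ?_⟩
  · rw [add_comm, Function.iterate_add_apply, ← horbit m le_rfl]
    simpa [chainOrbit, g] using hclose
  · simpa [a, b, horbit j hjm, show j ≠ 0 by omega, show j ≠ m + 1 by omega] using hint j hjm

/-- If disjoint h-sets `N₀, N₂` satisfy `N₀ ⟹ N₂`, `N₂ ⟹ N₂` (for `f`) and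
`N₂ ⟹ N₀` for `f³`, then `f` has a fixed point and, for every `n ≥ 5`, a
periodic point of least period exactly `n` which starts in `int N₀` and whose
itinerary positions in `N₂` lie in `int N₂`. -/
theorem stmt_10 (f : ℝ × ℝ → ℝ × ℝ) (hf : Continuous f)
    (a₀ b₀ a₂ b₂ r : ℝ) (h₀ : a₀ ≤ b₀) (h₂ : a₂ ≤ b₂) (hr : 0 < r)
    (hdisj : Disjoint (HSet a₀ b₀ r) (HSet a₂ b₂ r))
    (hc02 : CoversH f a₀ b₀ a₂ b₂ r)
    (hc22 : CoversH f a₂ b₂ a₂ b₂ r)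
    (hc20 : CoversH (f^[3]) a₂ b₂ a₀ b₀ r) :
    (∃ x : ℝ × ℝ, f x = x) ∧
    ∀ n : ℕ, 5 ≤ n → ∃ x : ℝ × ℝ, Function.minimalPeriod f x = n ∧
      x ∈ interior (HSet a₀ b₀ r) ∧
      ∀ j : ℕ, 1 ≤ j → j ≤ n - 3 → f^[j] x ∈ interior (HSet a₂ b₂ r) := by
  refine ⟨?_, fun n hn => ?_⟩
  · obtain ⟨p, hp, -⟩ := exists_periodic_chainOrbit_of_coversH (g := fun _ => f)
      (a := fun _ => a₂) (b := fun _ => b₂) (m := 0) (fun _ _ => h₂) hr.le (fun _ _ => hc22)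
      rfl rfl (fun _ _ => hf)
    exact ⟨p, hp⟩
  obtain ⟨p, hper, hp₀, hp₂⟩ := exists_periodicPt_of_coversH_loop hf h₀ h₂ hr.le hc02 hc22 hc20
    (m := n - 3) (by omega)
  rw [Nat.sub_add_cancel (by omega)] at hper
  refine ⟨p, Function.minimalPeriod_eq_of_iterate_ne (by omega) hper fun j hj hjn hfix => ?_,
    hp₀, hp₂⟩
  have hj₂ := interior_subset (hp₂ j hj (by omega))
  rw [hfix] at hj₂
  exact hdisj.ne_of_mem (interior_subset hp₀) hj₂ rfl
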